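/- Let v_i be an internal vertex of the shortest s-t path P_G(s,t), and let T_1(v_i), T_2(v_i), F(v_i) be the parts of T_s \ {v_i} as defined. Then for all x ∈ T_1(v_i), d_{G \ v_i}(s, x) = d_G(s, x), and for all y ∈ T_2(v_i), d_{G \ v_i}(y, t) = d_G(y, t). -/

import Mathlib

open Classical SimpleGraph

noncomputable section

variable {V : Type*}

/-- Total weight of a walk, summing `w` over its darts. -/
def walkWeight (G : SimpleGraph V) (w : V → V → ℝ) {u v : V} (p : G.Walk u v) : ℝ :=
  (p.darts.map fun d => w d.fst d.snd).sum

/-- Weighted shortest-path distance: infimum of walk weights. -/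
def wdist (G : SimpleGraph V) (w : V → V → ℝ) (u v : V) : ℝ :=
  sInf {r | ∃ p : G.Walk u v, walkWeight G w p = r}

/-- The graph obtained by deleting a set of vertices (kept on the same vertex type). -/
def delVerts (G : SimpleGraph V) (S : Set V) : SimpleGraph V where
  Adj a b := G.Adj a b ∧ a ∉ S ∧ b ∉ S
  symm := ⟨fun a b h => ⟨h.1.symm, h.2.2, h.2.1⟩⟩
  loopless := ⟨fun a h => G.loopless.irrefl a h.1⟩

/-- `u` is in the subtree of `T` rooted at the `k`-th vertex of the path `vp`. -/
def inSub (T : SimpleGraph V) (vp : ℕ → V) (k : ℕ) (u : V) : Prop :=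
  k = 0 ∨ (T.deleteEdges {s(vp (k-1), vp k)}).Reachable (vp k) u

/-- The label of a vertex: the largest `k ≤ l` with `u` in the subtree rooted at `vp k`. -/
def label (T : SimpleGraph V) (vp : ℕ → V) (l : ℕ) (u : V) : ℕ :=
  sSup {k | k ≤ l ∧ inSub T vp k u}

/-!
Deleting `v` never shortens distances, so it suffices to find, for each pair, a walk avoiding `v`
that is no longer than any walk through `v`. For `x ∈ T₁(v)` the tree path from `s` avoids `v`
and is already shortest in `G`. For `y ∈ T₂(v)`, with `x = v_{i+1}` and `r` the tree path from `x`
to `y`, the tree path from `s` to `y` is `P(s, v)`, the edge `vx`, then `r`; as it is shortest,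
every walk from `y` to `v` costs at least `w(v, x) + |r|`. As `P` is shortest, every walk from `v`
to `t` costs at least `w(v, x) + |P(x, t)|`. So the walk `r⁻¹ ++ P(x, t)`, which avoids `v`, beats
every walk through `v`.
-/

namespace SimpleGraph

variable {G H : SimpleGraph V} {S : Set V} {a b m u v x : V}

lemma delVerts_le (G : SimpleGraph V) (S : Set V) : delVerts G S ≤ G := fun _ _ h => h.1

lemma delVerts_mono (hHG : H ≤ G) (S : Set V) : delVerts H S ≤ delVerts G S :=
  fun _ _ h => ⟨hHG h.1, h.2⟩

namespace Walk

lemma exists_eq_append_cons (p : G.Walk u v) {i : ℕ} (hi : i < p.length) :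
    ∃ (q₁ : G.Walk u (p.getVert i)) (q₂ : G.Walk (p.getVert (i + 1)) v),
      p = q₁.append (cons (p.adj_getVert_succ hi) q₂) := by
  refine ⟨p.take i, p.drop (i + 1), ext_support ?_⟩
  rw [support_append, support_cons, List.tail_cons, support_take,
    drop_support_eq_support_drop_min, min_eq_left (by omega), List.take_append_drop]

lemma mem_edgeSet_delVerts {q : G.Walk a b} (hq : ∀ z ∈ q.support, z ∉ S) :
    ∀ e ∈ q.edges, e ∈ (delVerts G S).edgeSet := by
  intro e he
  induction e using Sym2.ind with
  | _ c d =>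
    exact ⟨q.adj_of_mem_edges he, hq _ (q.fst_mem_support_of_mem_edges he),
      hq _ (q.snd_mem_support_of_mem_edges he)⟩

lemma notMem_of_mem_support_delVerts (q : (delVerts G S).Walk a b) (ha : a ∉ S) :
    ∀ z ∈ q.support, z ∉ S := by
  induction q with
  | nil => simpa using ha
  | cons h q ih =>
    intro z hz
    rcases (by simpa using hz : z = _ ∨ z ∈ q.support) with rfl | hz
    exacts [ha, ih h.2.2 z hz]

lemma isPath_append_of_disjoint {p : G.Walk a m} {q : G.Walk m b} (hp : p.IsPath) (hq : q.IsPath)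
    (hpq : p.support.Disjoint q.support.tail) : (p.append q).IsPath := by
  rw [isPath_def, support_append, List.nodup_append]
  exact ⟨hp.support_nodup, hq.support_nodup.sublist (List.tail_sublist _),
    fun _ ha _ hb hab => hpq ha (hab ▸ hb)⟩

end Walk

open Walk

lemma IsAcyclic.isPath_append_cons (hG : G.IsAcyclic) {p : G.Walk a v} (h : G.Adj v x)
    {r : G.Walk x b} (hp : p.IsPath) (hx : x ∉ p.support) (hr : r.IsPath) (hv : v ∉ r.support) :
    (p.append (cons h r)).IsPath := by
  refine isPath_append_of_disjoint hp ((cons_isPath_iff h r).2 ⟨hr, hv⟩) ?_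
  -- a common vertex `z` would close the cycle `z ⋯ v – x ⋯ z`
  intro z hzp hzr
  rw [support_cons, List.tail_cons] at hzr
  refine hx (support_dropUntil_subset_support _ hzp ?_)
  refine hG.mem_support_of_ne_mem_support_of_adj_of_isPath (hp.dropUntil hzp)
    (hr.takeUntil hzr).reverse h fun hv' => hv ?_
  rw [support_reverse, List.mem_reverse] at hv'
  exact support_takeUntil_subset_support _ _ hv'

end SimpleGraph

open Walk

section Weight

variable {G H : SimpleGraph V} {w : V → V → ℝ} {S : Set V} {a b m u v x y : V}

@[simp] lemma walkWeight_nil : walkWeight G w (nil : G.Walk u u) = 0 := rfl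

@[simp] lemma walkWeight_cons (h : G.Adj u v) (p : G.Walk v x) :
    walkWeight G w (cons h p) = w u v + walkWeight G w p := by
  simp [walkWeight]

@[simp] lemma walkWeight_append (p : G.Walk a m) (q : G.Walk m b) :
    walkWeight G w (p.append q) = walkWeight G w p + walkWeight G w q := by
  simp [walkWeight, darts_append]

lemma walkWeight_reverse (hws : ∀ a b, w a b = w b a) (p : G.Walk a b) :
    walkWeight G w p.reverse = walkWeight G w p := by
  induction p with
  | nil => rfl
  | cons h p ih => simp [ih, hws, add_comm]

lemma walkWeight_eq_sum_zip (p : G.Walk a b) :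
    walkWeight G w p = ((p.support.zip p.support.tail).map fun e => w e.1 e.2).sum := by
  induction p with
  | nil => rfl
  | cons h p ih => rw [walkWeight_cons, ih, support_cons, ← cons_tail_support p]; rfl

lemma walkWeight_congr_support (p : G.Walk a b) (q : H.Walk a b) (h : p.support = q.support) :
    walkWeight G w p = walkWeight H w q := by
  simp only [walkWeight_eq_sum_zip, h]

@[simp] lemma walkWeight_mapLe (hGH : G ≤ H) (p : G.Walk a b) :
    walkWeight H w (p.mapLe hGH) = walkWeight G w p :=
  walkWeight_congr_support _ _ (support_mapLe_eq_support hGH p)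

@[simp] lemma walkWeight_transfer (p : G.Walk a b) (hp : ∀ e ∈ p.edges, e ∈ H.edgeSet) :
    walkWeight H w (p.transfer H hp) = walkWeight G w p :=
  walkWeight_congr_support _ _ (support_transfer p hp)

lemma walkWeight_nonneg (hw0 : ∀ a b, G.Adj a b → 0 ≤ w a b) (p : G.Walk a b) :
    0 ≤ walkWeight G w p := by
  induction p with
  | nil => simp
  | cons h p ih => simpa using add_nonneg (hw0 _ _ h) ih

lemma walkWeight_bypass_le (hw0 : ∀ a b, G.Adj a b → 0 ≤ w a b) (p : G.Walk a b) :
    walkWeight G w p.bypass ≤ walkWeight G w p :=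
  (p.darts_bypass_sublist_darts.map _).sum_le_sum fun _ hd => by
    obtain ⟨d, _, rfl⟩ := List.mem_map.1 hd
    exact hw0 _ _ d.adj

lemma wdist_le_walkWeight (hw0 : ∀ a b, G.Adj a b → 0 ≤ w a b) (p : G.Walk a b) :
    wdist G w a b ≤ walkWeight G w p :=
  csInf_le ⟨0, by rintro r ⟨q, rfl⟩; exact walkWeight_nonneg hw0 q⟩ ⟨p, rfl⟩

lemma le_wdist {c : ℝ} (p : G.Walk a b) (h : ∀ q : G.Walk a b, c ≤ walkWeight G w q) :
    c ≤ wdist G w a b :=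
  le_csInf ⟨_, p, rfl⟩ fun _ ⟨q, hq⟩ => hq ▸ h q

lemma wdist_le_wdist_of_le (hw0 : ∀ a b, G.Adj a b → 0 ≤ w a b) (hHG : H ≤ G)
    (p : H.Walk a b) : wdist G w a b ≤ wdist H w a b :=
  le_wdist p fun q => by
    rw [← walkWeight_mapLe hHG]
    exact wdist_le_walkWeight hw0 _

lemma SimpleGraph.IsAcyclic.walkWeight_eq_wdist (hG : G.IsAcyclic)
    (hw0 : ∀ a b, G.Adj a b → 0 ≤ w a b) {p : G.Walk a b} (hp : p.IsPath) :
    walkWeight G w p = wdist G w a b :=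
  le_antisymm (le_wdist p fun q => by
      rw [← Subtype.mk.inj <|
        (hG.subsingleton_path a b).elim ⟨_, q.bypass_isPath⟩ ⟨_, hp⟩]
      exact walkWeight_bypass_le hw0 q)
    (wdist_le_walkWeight hw0 p)

lemma wdist_delVerts_eq (hw0 : ∀ a b, G.Adj a b → 0 ≤ w a b) (c : (delVerts G S).Walk a b)
    (hc : ∀ q : G.Walk a b, (∃ z ∈ q.support, z ∈ S) →
      walkWeight (delVerts G S) w c ≤ walkWeight G w q) :
    wdist (delVerts G S) w a b = wdist G w a b := by
  have hw0S : ∀ a b, (delVerts G S).Adj a b → 0 ≤ w a b := fun a b h => hw0 a b h.1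
  refine le_antisymm (le_wdist (c.mapLe (delVerts_le G S)) fun q => ?_)
    (wdist_le_wdist_of_le hw0 (delVerts_le G S) c)
  by_cases hqS : ∃ z ∈ q.support, z ∈ S
  · exact (wdist_le_walkWeight hw0S c).trans (hc q hqS)
  · push Not at hqS
    rw [← walkWeight_transfer q (mem_edgeSet_delVerts hqS)]
    exact wdist_le_walkWeight hw0S _

lemma wdist_delVerts_singleton_eq (hw0 : ∀ a b, G.Adj a b → 0 ≤ w a b)
    (c : (delVerts G {v}).Walk a b)
    (hc : ∀ (q₁ : G.Walk a v) (q₂ : G.Walk v b),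
      walkWeight (delVerts G {v}) w c ≤ walkWeight G w q₁ + walkWeight G w q₂) :
    wdist (delVerts G {v}) w a b = wdist G w a b :=
  wdist_delVerts_eq hw0 c fun q ⟨z, hz, hzv⟩ => by
    obtain rfl : z = v := hzv
    exact (hc _ _).trans_eq (by rw [← walkWeight_append, take_spec q hz])

lemma wdist_delVerts_source_eq_of_reachable {T : SimpleGraph V}
    (hw0 : ∀ a b, G.Adj a b → 0 ≤ w a b) (hTG : T ≤ G) (hT : T.IsAcyclic)
    (hab : wdist T w a b = wdist G w a b)
    (hr : (delVerts T S).Reachable a b) : wdist (delVerts G S) w a b = wdist G w a b := by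
  obtain ⟨r⟩ := hr
  refine wdist_delVerts_eq hw0 (r.bypass.mapLe (delVerts_mono hTG S)) fun q _ => ?_
  have hrT : (r.bypass.mapLe (delVerts_le T S)).IsPath := r.bypass_isPath.mapLe _
  rw [walkWeight_mapLe, ← walkWeight_mapLe (delVerts_le T S),
    hT.walkWeight_eq_wdist (fun a b h => hw0 a b (hTG h)) hrT, hab]
  exact wdist_le_walkWeight hw0 q

lemma wdist_delVerts_target_eq_of_reachable {T : SimpleGraph V}
    (hw0 : ∀ a b, G.Adj a b → 0 ≤ w a b) (hws : ∀ a b, w a b = w b a) (hTG : T ≤ G)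
    (hT : T.IsAcyclic) {q₁ : G.Walk a v} {h : G.Adj v x} {q₂ : G.Walk x b}
    (hp : (q₁.append (cons h q₂)).IsPath)
    (hps : walkWeight G w (q₁.append (cons h q₂)) = wdist G w a b)
    (hpT : ∀ e ∈ (q₁.append (cons h q₂)).edges, e ∈ T.edgeSet)
    (hay : wdist T w a y = wdist G w a y) (hr : (delVerts T {v}).Reachable x y) :
    wdist (delVerts G {v}) w y b = wdist G w y b := by
  obtain ⟨r⟩ := hr
  have hq₁ : q₁.IsPath := hp.of_append_left
  have hvq₂ : v ∉ q₂.support := ((cons_isPath_iff h q₂).1 hp.of_append_right).2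
  have hxq₁ : x ∉ q₁.support := fun hx =>
    hp.ne_of_mem_support_of_append h.ne' hx (by simp) rfl
  have hvr : v ∉ r.bypass.support := fun hv =>
    notMem_of_mem_support_delVerts r.bypass (by simpa using h.ne') v hv rfl
  have hq₁T : ∀ e ∈ q₁.edges, e ∈ T.edgeSet := fun e he => hpT e (by simp [he])
  have hTpath := hT.isPath_append_cons (T.mem_edgeSet.1 (hpT s(v, x) (by simp)))
    (hq₁.transfer hq₁T) (by simpa using hxq₁) (r.bypass_isPath.mapLe (delVerts_le T {v}))
    (by simpa using hvr)
  have hay' : wdist G w a y = walkWeight G w q₁ + w v x + walkWeight _ w r.bypass := by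
    rw [← hay, ← hT.walkWeight_eq_wdist (fun a b h => hw0 a b (hTG h)) hTpath]
    simp [add_assoc]
  have hsuffix : ∀ q : G.Walk v b, w v x + walkWeight G w q₂ ≤ walkWeight G w q := fun q => by
    have := wdist_le_walkWeight hw0 (q₁.append q)
    simp only [walkWeight_append, walkWeight_cons] at hps this
    linarith
  refine wdist_delVerts_singleton_eq hw0
    ((r.bypass.mapLe (delVerts_mono hTG {v})).reverse.append
      (q₂.transfer _ (mem_edgeSet_delVerts fun z hz hzv => hvq₂ (hzv ▸ hz)))) fun q q' => ?_
  have := wdist_le_walkWeight hw0 (q₁.append q.reverse)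
  simp only [walkWeight_append, walkWeight_reverse hws, walkWeight_mapLe,
    walkWeight_transfer] at this ⊢
  linarith [hsuffix q', hw0 v x h]

end Weight

theorem stmt15_general {V : Type*}
    (G : SimpleGraph V) (w : V → V → ℝ)
    (hw : ∀ a b, G.Adj a b → 0 < w a b) (hws : ∀ a b, w a b = w b a)
    (s t : V) (p : G.Walk s t) (hp : p.IsPath)
    (hps : walkWeight G w p = wdist G w s t)
    (T : SimpleGraph V) (hTG : T ≤ G) (hT : T.IsTree)
    (hSPT : ∀ v, wdist T w s v = wdist G w s v)
    (hPT : ∀ e ∈ p.edges, e ∈ T.edgeSet)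
    (i : ℕ) (hil : i + 1 ≤ p.length)
    :
    (∀ x, (delVerts T {p.getVert i}).Reachable s x →
      wdist (delVerts G {p.getVert i}) w s x = wdist G w s x) ∧
    (∀ y, (delVerts T {p.getVert i}).Reachable (p.getVert (i+1)) y →
      wdist (delVerts G {p.getVert i}) w y t = wdist G w y t) := by
  have hw0 : ∀ a b, G.Adj a b → 0 ≤ w a b := fun a b h => (hw a b h).le
  obtain ⟨q₁, q₂, hpq⟩ := p.exists_eq_append_cons (show i < p.length by omega)
  rw [hpq] at hp hps hPT
  exact ⟨fun x hx => wdist_delVerts_source_eq_of_reachable hw0 hTG hT.isAcyclic (hSPT x) hx,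
    fun y hy => wdist_delVerts_target_eq_of_reachable hw0 hws hTG hT.isAcyclic hp hps hPT
      (hSPT y) hy⟩

theorem stmt15 {V : Type*}
    (G : SimpleGraph V) (hconn : G.Connected) (w : V → V → ℝ)
    (hw : ∀ a b, G.Adj a b → 0 < w a b) (hws : ∀ a b, w a b = w b a)
    (s t : V) (p : G.Walk s t) (hp : p.IsPath)
    (hps : walkWeight G w p = wdist G w s t)
    (T : SimpleGraph V) (hTG : T ≤ G) (hT : T.IsTree)
    (hSPT : ∀ v, wdist T w s v = wdist G w s v)
    (hPT : ∀ e ∈ p.edges, e ∈ T.edgeSet)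
    (i : ℕ) (hi1 : 1 ≤ i) (hil : i + 1 ≤ p.length)
    :
    (∀ x, (delVerts T {p.getVert i}).Reachable s x →
      wdist (delVerts G {p.getVert i}) w s x = wdist G w s x) ∧
    (∀ y, (delVerts T {p.getVert i}).Reachable (p.getVert (i+1)) y →
      wdist (delVerts G {p.getVert i}) w y t = wdist G w y t) :=
  stmt15_general G w hw hws s t p hp hps T hTG hT hSPT hPT i hil
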